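/- arXiv:1602.02670 — 8 statements merged into one kernel-verified Lean document; each statement's English description precedes it below -/
import Mathlib

section
/- Let G = (V,E) be a finite directed graph. Define a finite directed graph G' = (V', E') by V' = {s} ⊎ (V × {1,2,3,4}) with s a new vertex, and E' consisting of: an edge (s,(v,1)) for every v ∈ V; an edge ((v,i),(u,i+1)) for i ∈ {1,2,3} if and only if (v,u) ∈ E; and an edge ((v,4), s) for every v ∈ V. For v ∈ V set T_v = {(u,1) : u ∈ V, u ≠ v} ∪ {(u,4) : u ∈ V, u ≠ v}. Then the following are equivalent: (1) G contains a triangle, i.e., there exist vertices a, b, c with (a,b) ∈ E, (b,c) ∈ E and (c,a) ∈ E; (2) there exist v ∈ V and an infinite path in G' starting at s that never visits a vertex of T_v; (3) there exist v ∈ V, a vertex w ∈ V', and an infinite path in G' starting at w that never visits a vertex of T_v. -/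
/-- An infinite path in a directed graph with edge relation `E`:
`ω n` and `ω (n+1)` are always joined by an edge. -/
def IsInfPath {V : Type*} (E : V → V → Prop) (ω : ℕ → V) : Prop :=
  ∀ n, E (ω n) (ω (n + 1))

/-- The edge relation of the graph `G'` built from `G = (V,E)`: the vertex `none` is the
new start vertex `s`, and `some (v, i)` with `i : Fin 4` is the `(i+1)`-st copy of `v`
(so `i = 0,1,2,3` correspond to the copies `1,2,3,4` of the informal statement).
Edges: `s → (v,1)` for all `v`; `(v,i) → (u,i+1)` iff `(v,u) ∈ E`; `(v,4) → s` for all `v`. -/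
def TriEdge {V : Type*} (E : V → V → Prop) :
    Option (V × Fin 4) → Option (V × Fin 4) → Prop
  | none, none => False
  | none, some p => p.2 = (0 : Fin 4)
  | some p, none => p.2 = (3 : Fin 4)
  | some p, some q => (q.2 : ℕ) = (p.2 : ℕ) + 1 ∧ E p.1 q.1

/-- The target set `T_v = {(u,1) : u ≠ v} ∪ {(u,4) : u ≠ v}`. -/
def TriTarget {V : Type*} (v : V) : Set (Option (V × Fin 4)) :=
  {x | ∃ u : V, u ≠ v ∧ (x = some (u, (0 : Fin 4)) ∨ x = some (u, (3 : Fin 4)))}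

lemma triStep {V : Type*} {E : V → V → Prop} {ω : ℕ → Option (V × Fin 4)}
    (h : IsInfPath (TriEdge E) ω) (n : ℕ) (p : V × Fin 4) (hp : ω n = some p) :
    (ω (n+1) = none ∧ (p.2 : ℕ) = 3) ∨
      ∃ q, ω (n+1) = some q ∧ (q.2 : ℕ) = (p.2 : ℕ) + 1 ∧ E p.1 q.1 := by
  have h1 := h n
  rw [hp] at h1
  cases hq : ω (n+1) with
  | none =>
    rw [hq] at h1
    left
    exact ⟨rfl, by simpa [TriEdge] using congrArg Fin.val h1⟩
  | some q =>
    rw [hq] at h1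
    exact Or.inr ⟨q, rfl, h1⟩

lemma reachNone {V : Type*} {E : V → V → Prop} {ω : ℕ → Option (V × Fin 4)}
    (h : IsInfPath (TriEdge E) ω) : ∃ m, ω m = none := by
  have key : ∀ k n p, ω n = some p → (p.2 : ℕ) + k = 3 → ω (n + k + 1) = none := by
    intro k
    induction k with
    | zero =>
      intro n p hp h3
      rcases triStep h n p hp with ⟨hn, _⟩ | ⟨q, _, hval, _⟩
      · simpa using hn
      · have := q.2.isLt; omega
    | succ k ih =>
      intro n p hp h3
      rcases triStep h n p hp with ⟨_, h33⟩ | ⟨q, hq, hval, _⟩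
      · omega
      · have := ih (n+1) q hq (by omega)
        have heq : n + (k + 1) + 1 = n + 1 + k + 1 := by omega
        rw [heq]; exact this
  cases h0 : ω 0 with
  | none => exact ⟨0, h0⟩
  | some p =>
    have := p.2.isLt
    exact ⟨0 + (3 - (p.2 : ℕ)) + 1, key (3 - (p.2 : ℕ)) 0 p h0 (by omega)⟩

lemma pathToTri {V : Type*} {E : V → V → Prop} {v : V} {ω : ℕ → Option (V × Fin 4)}
    (h0 : ω 0 = none) (h : IsInfPath (TriEdge E) ω) (ht : ∀ n, ω n ∉ TriTarget v) :
    ∃ a b c : V, E a b ∧ E b c ∧ E c a := by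
  have h0v : ((0 : Fin 4) : ℕ) = 0 := rfl
  have h3v : ((3 : Fin 4) : ℕ) = 3 := rfl
  have h1 := h 0
  rw [h0] at h1
  cases hq : ω 1 with
  | none => rw [hq] at h1; exact absurd h1 (by simp [TriEdge])
  | some p =>
    rw [hq] at h1
    have hp2 : (p.2 : ℕ) = 0 := by
      have := congrArg Fin.val h1; simpa [TriEdge] using this
    have hp1 : p.1 = v := by
      by_contra hne
      refine ht 1 ⟨p.1, hne, Or.inl ?_⟩
      rw [hq]
      exact congrArg some (Prod.ext rfl (Fin.ext (by rw [h0v]; exact hp2)))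
    rcases triStep h 1 p hq with ⟨_, h3⟩ | ⟨q, hq2, hq2v, hE1⟩
    · omega
    rcases triStep h 2 q hq2 with ⟨_, h3⟩ | ⟨r, hr, hrv, hE2⟩
    · omega
    rcases triStep h 3 r hr with ⟨_, h3⟩ | ⟨t, htt, htv, hE3⟩
    · omega
    have ht1 : t.1 = v := by
      by_contra hne
      refine ht 4 ⟨t.1, hne, Or.inr ?_⟩
      rw [htt]
      exact congrArg some (Prod.ext rfl (Fin.ext (by rw [h3v]; omega)))
    exact ⟨v, q.1, r.1, hp1 ▸ hE1, hE2, ht1 ▸ hE3⟩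

def triPath {V : Type*} (a b c : V) : ℕ → Option (V × Fin 4) := fun n =>
  [none, some (a, (0 : Fin 4)), some (b, 1), some (c, 2), some (a, 3)].getD (n % 5) none

lemma triToPath {V : Type*} {E : V → V → Prop} {a b c : V}
    (hab : E a b) (hbc : E b c) (hca : E c a) :
    (triPath a b c) 0 = none ∧ IsInfPath (TriEdge E) (triPath a b c) ∧
      ∀ n, (triPath a b c) n ∉ TriTarget a := by
  refine ⟨rfl, ?_, ?_⟩
  · intro n
    have hm : n % 5 = 0 ∨ n % 5 = 1 ∨ n % 5 = 2 ∨ n % 5 = 3 ∨ n % 5 = 4 := by omega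
    rcases hm with hm | hm | hm | hm | hm <;>
      simp [triPath, Nat.add_mod, hm, TriEdge, hab, hbc, hca] <;> rfl
  · intro n
    have hm : n % 5 = 0 ∨ n % 5 = 1 ∨ n % 5 = 2 ∨ n % 5 = 3 ∨ n % 5 = 4 := by omega
    rintro ⟨u, hu, hor⟩
    rcases hm with hm | hm | hm | hm | hm <;>
      rcases hor with hh | hh <;>
      simp only [triPath, hm, List.getD] at hh <;>
      simp_all

theorem stmt0 {V : Type*} [Fintype V] (E : V → V → Prop) :
    ((∃ a b c : V, E a b ∧ E b c ∧ E c a) ↔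
      ∃ (v : V) (ω : ℕ → Option (V × Fin 4)),
        ω 0 = none ∧ IsInfPath (TriEdge E) ω ∧ ∀ n, ω n ∉ TriTarget v) ∧
    ((∃ (v : V) (ω : ℕ → Option (V × Fin 4)),
        ω 0 = none ∧ IsInfPath (TriEdge E) ω ∧ ∀ n, ω n ∉ TriTarget v) ↔
      ∃ (v : V) (w : Option (V × Fin 4)) (ω : ℕ → Option (V × Fin 4)),
        ω 0 = w ∧ IsInfPath (TriEdge E) ω ∧ ∀ n, ω n ∉ TriTarget v) := by
  constructor
  · constructor
    · rintro ⟨a, b, c, hab, hbc, hca⟩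
      obtain ⟨h0, hp, ht⟩ := triToPath (E := E) hab hbc hca
      exact ⟨a, triPath a b c, h0, hp, ht⟩
    · rintro ⟨v, ω, h0, hp, ht⟩
      exact pathToTri h0 hp ht
  · constructor
    · rintro ⟨v, ω, h0, hp, ht⟩
      exact ⟨v, none, ω, h0, hp, ht⟩
    · rintro ⟨v, w, ω, _, hp, ht⟩
      obtain ⟨m, hm⟩ := reachNone hp
      have htri : ∃ a b c : V, E a b ∧ E b c ∧ E c a := by
        refine pathToTri (ω := fun n => ω (m + n)) (by simpa using hm)
          (fun n => by have := hp (m + n); rwa [Nat.add_assoc] at this) (fun n => ht (m + n))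
      obtain ⟨a, b, c, hab, hbc, hca⟩ := htri
      obtain ⟨h0, hpp, htt⟩ := triToPath (E := E) hab hbc hca
      exact ⟨a, triPath a b c, h0, hpp, htt⟩
end

section
/- Let G = (V,E) be a finite directed graph that is strongly connected and contains at least one edge, and let T ⊆ V. Then there exist an infinite path ω in G and a vertex t ∈ T with t ∉ Inf(ω) if and only if there exists a closed walk in G whose vertex set does not contain all elements of T. Moreover, if such a closed walk exists, then for every vertex v ∈ V there exist an infinite path ω starting at v and a vertex t ∈ T with t ∉ Inf(ω). -/
/-- `Inf(ω)`: the set of vertices occurring infinitely often on `ω`. -/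
def InfOcc {V : Type*} (ω : ℕ → V) : Set V :=
  {u | ∀ N, ∃ n, N ≤ n ∧ ω n = u}

/-- A closed walk `w 0, w 1, …, w ℓ` of length `ℓ ≥ 1` with `w ℓ = w 0`;
its vertex set is `{w i : i < ℓ}`. -/
def IsClosedWalk {V : Type*} (E : V → V → Prop) (ℓ : ℕ) (w : ℕ → V) : Prop :=
  1 ≤ ℓ ∧ (∀ i < ℓ, E (w i) (w (i + 1))) ∧ w ℓ = w 0

lemma exists_finite_path {V : Type*} {E : V → V → Prop} {u v : V}
    (h : Relation.ReflTransGen E u v) :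
    ∃ (m : ℕ) (p : ℕ → V), p 0 = u ∧ p m = v ∧ ∀ i < m, E (p i) (p (i + 1)) := by
  induction h with
  | refl => exact ⟨0, fun _ => u, rfl, rfl, by omega⟩
  | @tail b c hab hbc ih =>
    obtain ⟨m, p, h0, hm, he⟩ := ih
    refine ⟨m + 1, fun n => if n = m + 1 then c else p n, by simp [h0], by simp, ?_⟩
    intro i hi
    by_cases hcase : i = m
    · subst hcase
      simp [hm, hbc]
    · have h1 : i ≠ m + 1 := by omega
      have h2 : i + 1 ≠ m + 1 := by omega
      simp only [h1, h2, if_false]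
      exact he i (by omega)

lemma closed_walk_step {V : Type*} {E : V → V → Prop} {ℓ : ℕ} {w : ℕ → V}
    (h : IsClosedWalk E ℓ w) (k : ℕ) : E (w (k % ℓ)) (w ((k + 1) % ℓ)) := by
  obtain ⟨hℓ, he, hc⟩ := h
  have h1 : k % ℓ < ℓ := Nat.mod_lt _ (by omega)
  have h2 := he _ h1
  have key : (k + 1) % ℓ = (k % ℓ + 1) % ℓ := (Nat.mod_add_mod k ℓ 1).symm
  by_cases hcase : k % ℓ + 1 = ℓ
  · have h3 : w (k % ℓ + 1) = w 0 := by rw [hcase]; exact hc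
    rw [key, hcase, Nat.mod_self, ← h3]
    exact h2
  · rw [key, Nat.mod_eq_of_lt (show k % ℓ + 1 < ℓ by omega)]
    exact h2

lemma build_path {V : Type*} {E : V → V → Prop} {T : Set V}
    (hsc : ∀ u v : V, Relation.ReflTransGen E u v)
    (h : ∃ (ℓ : ℕ) (w : ℕ → V), IsClosedWalk E ℓ w ∧ ∃ t ∈ T, ∀ i < ℓ, w i ≠ t) :
    ∀ v : V, ∃ (ω : ℕ → V) (t : V),
      ω 0 = v ∧ IsInfPath E ω ∧ t ∈ T ∧ t ∉ InfOcc ω := by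
  obtain ⟨ℓ, w, hw, t, htT, havoid⟩ := h
  intro v
  obtain ⟨m, p, hp0, hpm, hpe⟩ := exists_finite_path (hsc v (w 0))
  refine ⟨fun n => if n < m then p n else w ((n - m) % ℓ), t, ?_, ?_, htT, ?_⟩
  · by_cases h0 : 0 < m
    · simp [h0, hp0]
    · have hm0 : m = 0 := by omega
      simp [hm0, Nat.mod_eq_of_lt hw.1, ← hpm, hm0, hp0]
  · intro n
    by_cases hn : n < m
    · by_cases hn1 : n + 1 < m
      · simp only [hn, hn1, if_true]
        exact hpe n hn
      · simp only [if_pos hn, if_neg (show ¬ n + 1 < m by omega)]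
        rw [show n + 1 - m = 0 by omega, Nat.zero_mod, ← hpm, show m = n + 1 by omega]
        exact hpe n hn
    · have hn1 : ¬ n + 1 < m := by omega
      simp only [hn, hn1, if_false]
      have : n + 1 - m = (n - m) + 1 := by omega
      rw [this]
      exact closed_walk_step hw (n - m)
  · intro hinf
    obtain ⟨n, hn, heq⟩ := hinf m
    have hnm : ¬ n < m := by omega
    simp only [hnm, if_false] at heq
    exact havoid _ (Nat.mod_lt _ hw.1) heq

theorem stmt2 {V : Type*} [Fintype V] (E : V → V → Prop) (T : Set V)
    (hsc : ∀ u v : V, Relation.ReflTransGen E u v)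
    (hedge : ∃ a b : V, E a b) :
    ((∃ (ω : ℕ → V) (t : V), IsInfPath E ω ∧ t ∈ T ∧ t ∉ InfOcc ω) ↔
      ∃ (ℓ : ℕ) (w : ℕ → V), IsClosedWalk E ℓ w ∧ ∃ t ∈ T, ∀ i < ℓ, w i ≠ t) ∧
    ((∃ (ℓ : ℕ) (w : ℕ → V), IsClosedWalk E ℓ w ∧ ∃ t ∈ T, ∀ i < ℓ, w i ≠ t) →
      ∀ v : V, ∃ (ω : ℕ → V) (t : V),
        ω 0 = v ∧ IsInfPath E ω ∧ t ∈ T ∧ t ∉ InfOcc ω) := by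
  constructor
  · constructor
    · rintro ⟨ω, t, hpath, htT, hnot⟩
      simp only [InfOcc, Set.mem_setOf_eq, not_forall] at hnot
      push_neg at hnot
      obtain ⟨N, hN⟩ := hnot
      obtain ⟨i, j, hij, heq⟩ := Finite.exists_ne_map_eq_of_infinite (fun n => ω (N + n))
      wlog hlt : i < j generalizing i j
      · exact this j i hij.symm heq.symm (by omega)
      refine ⟨j - i, fun k => ω (N + i + k), ⟨by omega, ?_, ?_⟩, t, htT, ?_⟩
      · intro k _
        show E (ω (N + i + k)) (ω (N + i + (k + 1)))
        rw [show N + i + (k + 1) = (N + i + k) + 1 by omega]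
        exact hpath _
      · show ω (N + i + (j - i)) = ω (N + i + 0)
        rw [show N + i + (j - i) = N + j by omega, Nat.add_zero]
        exact heq.symm
      · intro k _ hk
        exact hN (N + i + k) (by omega) hk
    · intro h
      obtain ⟨a, b, _⟩ := hedge
      obtain ⟨ω, t, _, hp, htT, hnot⟩ := build_path hsc h a
      exact ⟨ω, t, hp, htT, hnot⟩
  · exact build_path hsc
end

section
/- Let G = (V,E) be a finite, strongly connected directed graph containing at least one edge, let T ⊆ V be nonempty, let s ∈ T, and assume that the subgraph of G induced on V ∖ {s} contains no closed walk (equivalently, every closed walk of G visits s). Define the length of a closed walk v₀, …, v_ℓ as the number of indices i < ℓ with v_{i+1} ∈ T, and let δ be the minimum length over all closed walks that start and end at s. Then δ < |T| if and only if there exists a closed walk in G whose vertex set does not contain all elements of T. -/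
/-- The 0/1 length of `w 0, …, w ℓ`: the number of steps that enter `T`. -/
noncomputable def walkWeight {V : Type*} (T : Set V) (ℓ : ℕ) (w : ℕ → V) : ℕ :=
  {i : ℕ | i < ℓ ∧ w (i + 1) ∈ T}.ncard

section

variable {V : Type*} {E : V → V → Prop}

theorem Relation.TransGen.exists_walk {u v : V} (h : Relation.TransGen E u v) :
    ∃ (n : ℕ) (w : ℕ → V), 0 < n ∧ w 0 = u ∧ w n = v ∧ ∀ i < n, E (w i) (w (i + 1)) := by
  induction h using Relation.TransGen.head_induction_on with
  | @single a hav => exact ⟨1, fun i => if i = 0 then a else v, one_pos, rfl, rfl, by simpa⟩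
  | @head a b hab _ ih =>
    obtain ⟨n, w, hn, hw0, hwn, hstep⟩ := ih
    refine ⟨n + 1, fun | 0 => a | i + 1 => w i, n.succ_pos, rfl, hwn, ?_⟩
    rintro (_ | i) hi
    · simpa [hw0] using hab
    · exact hstep i (by omega)

theorem exists_isClosedWalk_of_transGen {s : V} (h : Relation.TransGen E s s) :
    ∃ (ℓ : ℕ) (w : ℕ → V), IsClosedWalk E ℓ w ∧ w 0 = s := by
  obtain ⟨n, w, hn, hw0, hwn, hstep⟩ := h.exists_walk
  exact ⟨n, w, ⟨hn, hstep, hwn.trans hw0.symm⟩, hw0⟩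

variable {ℓ : ℕ} {w : ℕ → V}

theorem IsClosedWalk.exists_succ_eq (hw : IsClosedWalk E ℓ w) {j : ℕ} (hj : j < ℓ) :
    ∃ i < ℓ, w (i + 1) = w j := by
  rcases j with _ | j
  · exact ⟨ℓ - 1, by omega, by rw [Nat.sub_add_cancel hw.1, hw.2.2]⟩
  · exact ⟨j, by omega, rfl⟩

theorem IsClosedWalk.rel_mod (hw : IsClosedWalk E ℓ w) (i : ℕ) :
    E (w (i % ℓ)) (w ((i + 1) % ℓ)) := by
  have hlt := Nat.mod_lt i hw.1
  have hrel := hw.2.1 _ hlt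
  rw [← Nat.mod_add_mod]
  obtain h | h : i % ℓ + 1 < ℓ ∨ i % ℓ + 1 = ℓ := by omega
  · rwa [Nat.mod_eq_of_lt h]
  · rw [h, Nat.mod_self, ← hw.2.2]
    rwa [h] at hrel

theorem IsClosedWalk.rotate (hw : IsClosedWalk E ℓ w) (k : ℕ) :
    IsClosedWalk E ℓ (fun i => w ((k + i) % ℓ)) :=
  ⟨hw.1, fun i _ => hw.rel_mod (k + i), by simp⟩

theorem isClosedWalk_shift {i j : ℕ} (hij : i < j)
    (hstep : ∀ q, i ≤ q → q < j → E (w q) (w (q + 1))) (heq : w j = w i) :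
    IsClosedWalk E (j - i) (fun x => w (i + x)) :=
  ⟨by omega, fun x hx => hstep (i + x) (by omega) (by omega),
    by simp [Nat.add_sub_cancel' hij.le, heq]⟩

theorem IsClosedWalk.exists_prefix_ne_apply_zero (hw : IsClosedWalk E ℓ w) :
    ∃ m, IsClosedWalk E m w ∧ ∀ j, 0 < j → j < m → w j ≠ w 0 := by
  classical
  have hret : ∃ m, 0 < m ∧ m ≤ ℓ ∧ w m = w 0 := ⟨ℓ, hw.1, le_rfl, hw.2.2⟩
  obtain ⟨hm0, hmℓ, hm⟩ := Nat.find_spec hret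
  exact ⟨Nat.find hret, ⟨hm0, fun i hi => hw.2.1 i (by omega), hm⟩,
    fun j hj hjm hjs => Nat.find_min hret hjm ⟨hj, by omega, hjs⟩⟩

theorem IsClosedWalk.ncard_le_walkWeight {T : Set V} (hw : IsClosedWalk E ℓ w)
    (hcover : ∀ t ∈ T, ∃ i < ℓ, w i = t) : T.ncard ≤ walkWeight T ℓ w := by
  have hfin : {i : ℕ | i < ℓ ∧ w (i + 1) ∈ T}.Finite :=
    (Set.finite_Iio ℓ).subset fun _ hi => hi.1
  have hsub : T ⊆ (fun i => w (i + 1)) '' {i : ℕ | i < ℓ ∧ w (i + 1) ∈ T} := by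
    intro t ht
    obtain ⟨j, hj, rfl⟩ := hcover t ht
    obtain ⟨i, hi, hij⟩ := hw.exists_succ_eq hj
    exact ⟨i, ⟨hi, hij ▸ ht⟩, hij⟩
  exact (Set.ncard_le_ncard hsub (hfin.image _)).trans (Set.ncard_image_le hfin)

theorem walkWeight_lt_ncard {T : Set V} {t : V} (hT : T.Finite) (ht : t ∈ T)
    (hinj : Set.InjOn (fun i => w (i + 1)) (Set.Iio ℓ)) (hmiss : ∀ i < ℓ, w (i + 1) ≠ t) :
    walkWeight T ℓ w < T.ncard :=
  calc walkWeight T ℓ w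
      = ((fun i => w (i + 1)) '' {i : ℕ | i < ℓ ∧ w (i + 1) ∈ T}).ncard :=
        (hinj.mono fun _ hi => hi.1).ncard_image.symm
    _ ≤ (T \ {t}).ncard :=
        Set.ncard_le_ncard (by rintro _ ⟨i, ⟨hi, hiT⟩, rfl⟩; exact ⟨hiT, hmiss i hi⟩) hT.sdiff
    _ < T.ncard := Set.ncard_sdiff_singleton_lt_of_mem ht hT

variable {s : V}

theorem IsClosedWalk.exists_apply_eq
    (hnos : ¬ ∃ (ℓ : ℕ) (w : ℕ → V), IsClosedWalk (fun a b => a ≠ s ∧ b ≠ s ∧ E a b) ℓ w)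
    (hw : IsClosedWalk E ℓ w) : ∃ i < ℓ, w i = s := by
  by_contra! h
  refine hnos ⟨ℓ, w, hw.1, fun i hi => ⟨h i hi, ?_, hw.2.1 i hi⟩, hw.2.2⟩
  obtain hlt | heq : i + 1 < ℓ ∨ i + 1 = ℓ := by omega
  · exact h _ hlt
  · rw [heq, hw.2.2]
    exact h 0 hw.1

theorem IsClosedWalk.injOn_succ
    (hnos : ¬ ∃ (ℓ : ℕ) (w : ℕ → V), IsClosedWalk (fun a b => a ≠ s ∧ b ≠ s ∧ E a b) ℓ w)
    (hw : IsClosedWalk E ℓ w)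
    (hfirst : ∀ j, 0 < j → j < ℓ → w j ≠ s) :
    Set.InjOn (fun i => w (i + 1)) (Set.Iio ℓ) := by
  have key : ∀ i j, i < j → j < ℓ → w (i + 1) ≠ w (j + 1) := by
    intro i j hij hjℓ heq
    obtain ⟨x, hx, hxs⟩ := (isClosedWalk_shift (w := w) (by omega : i + 1 < j + 1)
      (fun q _ hq => hw.2.1 q (by omega)) heq.symm).exists_apply_eq hnos
    exact hfirst (i + 1 + x) (by omega) (by omega) hxs
  intro i hi j hj h
  by_contra hne
  rcases Nat.lt_or_gt_of_ne hne with hlt | hlt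
  · exact key i j hlt hj h
  · exact key j i hlt hi h.symm

end

theorem stmt3_general {V : Type*} [Fintype V] (E : V → V → Prop) (T : Set V) (s : V)
    (hsc : ∀ u v : V, Relation.ReflTransGen E u v)
    (hedge : ∃ a b : V, E a b)
    -- the subgraph induced on `V \ {s}` contains no closed walk:
    (hnos : ¬ ∃ (ℓ : ℕ) (w : ℕ → V),
        IsClosedWalk (fun a b => a ≠ s ∧ b ≠ s ∧ E a b) ℓ w) :
    -- `δ` is the minimum, over closed walks starting and ending at `s`, of the
    -- number of indices `i < ℓ` with `w (i+1) ∈ T` (the 0/1 length of the walk)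
    sInf {d : ℕ | ∃ (ℓ : ℕ) (w : ℕ → V), IsClosedWalk E ℓ w ∧ w 0 = s ∧
        d = {i : ℕ | i < ℓ ∧ w (i + 1) ∈ T}.ncard} < T.ncard ↔
      ∃ (ℓ : ℕ) (w : ℕ → V), IsClosedWalk E ℓ w ∧ ∃ t ∈ T, ∀ i < ℓ, w i ≠ t := by
  set D : Set ℕ := {d | ∃ (ℓ : ℕ) (w : ℕ → V), IsClosedWalk E ℓ w ∧ w 0 = s ∧
    d = walkWeight T ℓ w}
  constructor
  · intro hlt
    obtain ⟨a, b, hab⟩ := hedge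
    obtain ⟨ℓ, w, hw, hw0⟩ := exists_isClosedWalk_of_transGen
      (Relation.TransGen.trans_right (hsc s a) (.head' hab (hsc b s)))
    obtain ⟨ℓ, w, hw, -, hδ⟩ := Nat.sInf_mem (s := D) ⟨_, ℓ, w, hw, hw0, rfl⟩
    by_contra! hcover
    exact (hδ ▸ hlt).not_ge (hw.ncard_le_walkWeight (hcover ℓ w hw))
  · rintro ⟨ℓ, w, hw, t, ht, hmiss⟩
    obtain ⟨k, hk, hks⟩ := hw.exists_apply_eq hnos
    obtain ⟨m, hwm, hfirst⟩ := (hw.rotate k).exists_prefix_ne_apply_zero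
    have hw0 : w ((k + 0) % ℓ) = s := by rwa [add_zero, Nat.mod_eq_of_lt hk]
    rw [hw0] at hfirst
    exact (Nat.sInf_le (s := D) ⟨m, _, hwm, hw0, rfl⟩).trans_lt <|
      walkWeight_lt_ncard T.toFinite ht (hwm.injOn_succ hnos hfirst)
        fun i _ => hmiss _ (Nat.mod_lt _ hw.1)

theorem stmt3 {V : Type*} [Fintype V] (E : V → V → Prop) (T : Set V) (s : V)
    (hsc : ∀ u v : V, Relation.ReflTransGen E u v)
    (hedge : ∃ a b : V, E a b)
    (hT : T.Nonempty) (hs : s ∈ T)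
    -- the subgraph induced on `V \ {s}` contains no closed walk:
    (hnos : ¬ ∃ (ℓ : ℕ) (w : ℕ → V),
        IsClosedWalk (fun a b => a ≠ s ∧ b ≠ s ∧ E a b) ℓ w) :
    -- `δ` is the minimum, over closed walks starting and ending at `s`, of the
    -- number of indices `i < ℓ` with `w (i+1) ∈ T` (the 0/1 length of the walk)
    sInf {d : ℕ | ∃ (ℓ : ℕ) (w : ℕ → V), IsClosedWalk E ℓ w ∧ w 0 = s ∧
        d = {i : ℕ | i < ℓ ∧ w (i + 1) ∈ T}.ncard} < T.ncard ↔
      ∃ (ℓ : ℕ) (w : ℕ → V), IsClosedWalk E ℓ w ∧ ∃ t ∈ T, ∀ i < ℓ, w i ≠ t :=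
  stmt3_general E T s hsc hedge hnos
end

section
/- Let P = ((V,E),(V₁,V_R)) be an MDP skeleton and let X be an end-component of P. Then: (a) for every S with X ⊆ S ⊆ V, X is contained in a single strongly connected component of the subgraph induced on S; and (b) for every S' with X ⊆ S' ⊆ V and every W ⊆ S' with W ∩ X = ∅, the random attractor Attr(P[S'], W) is disjoint from X. -/
/-- The subgraph induced on `X` is strongly connected: any two vertices of `X`
are joined by a path staying inside `X`. -/
def SCOn {V : Type*} (E : V → V → Prop) (X : Set V) : Prop :=
  ∀ u ∈ X, ∀ v ∈ X, Relation.ReflTransGen (fun a b => a ∈ X ∧ b ∈ X ∧ E a b) u v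

/-- `X` is an end-component of the MDP skeleton with edges `E`, random vertices `VR`
(and player-1 vertices `VRᶜ`): the induced subgraph is strongly connected and has an
edge, and all edges leaving random vertices of `X` stay in `X`. -/
def IsEC {V : Type*} (E : V → V → Prop) (VR X : Set V) : Prop :=
  SCOn E X ∧ (∃ a ∈ X, ∃ b ∈ X, E a b) ∧ ∀ v ∈ X ∩ VR, ∀ w, E v w → w ∈ X

/-- `C` is a strongly connected component of the subgraph induced on `S`. -/
def IsSCCIn {V : Type*} (E : V → V → Prop) (S C : Set V) : Prop :=
  C.Nonempty ∧ C ⊆ S ∧ SCOn (fun a b => a ∈ S ∧ b ∈ S ∧ E a b) C ∧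
    ∀ D, C ⊆ D → D ⊆ S → SCOn (fun a b => a ∈ S ∧ b ∈ S ∧ E a b) D → D = C

/-- The random attractor of `W` computed in the sub-MDP `P[S]`: the least set containing
`W` and closed under adding random vertices of `S` with a successor (within `S`) in the
attractor, and player-1 vertices of `S` all of whose successors within `S` are in the
attractor. -/
inductive AttrIn {V : Type*} (E : V → V → Prop) (VR S W : Set V) : V → Prop
  | base {v : V} : v ∈ S → v ∈ W → AttrIn E VR S W v
  | rand {v w : V} : v ∈ S → v ∈ VR → w ∈ S → E v w → AttrIn E VR S W w →
      AttrIn E VR S W v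
  | play {v : V} : v ∈ S → v ∉ VR → (∀ w ∈ S, E v w → AttrIn E VR S W w) →
      AttrIn E VR S W v

/-!
Part (a): `X` is strongly connected inside `S`, so it lies in the SCC of any of its
vertices, and an end-component is nonempty because it has an edge.

Part (b): every vertex of `X` has a successor in `X` (strong connectivity plus the edge) and
random vertices of `X` have all their successors in `X`. So a player-1 vertex of `X` can
stay in `X`, a random vertex cannot leave it, and by induction on the attractor no vertex
of `X` is ever added when the base set `W` avoids `X`.
-/

open Relation

section SCC

variable {V : Type*} {E E' : V → V → Prop} {S X : Set V} {a : V}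

def sccOf (E : V → V → Prop) (a : V) : Set V :=
  {v | ReflTransGen E a v ∧ ReflTransGen E v a}

theorem mem_sccOf_self : a ∈ sccOf E a := ⟨.refl, .refl⟩

theorem SCOn.mono (h : ∀ u ∈ X, ∀ v ∈ X, E u v → E' u v) (hX : SCOn E X) : SCOn E' X :=
  fun u hu v hv =>
    ReflTransGen.mono (fun _ _ hE => ⟨hE.1, hE.2.1, h _ hE.1 _ hE.2.1 hE.2.2⟩) _ _ (hX u hu v hv)

theorem SCOn.subset_sccOf (hX : SCOn E X) (ha : a ∈ X) : X ⊆ sccOf E a :=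
  fun v hv => ⟨ReflTransGen.mono (fun _ _ h => h.2.2) _ _ (hX a ha v hv),
    ReflTransGen.mono (fun _ _ h => h.2.2) _ _ (hX v hv a ha)⟩

theorem reflTransGen_sccOf {u v : V} (huv : ReflTransGen E u v) (hau : ReflTransGen E a u)
    (hva : ReflTransGen E v a) :
    ReflTransGen (fun x y => x ∈ sccOf E a ∧ y ∈ sccOf E a ∧ E x y) u v := by
  induction huv with
  | refl => exact .refl
  | @tail b c hub hbc ih =>
    have hba : ReflTransGen E b a := hva.head hbc
    exact (ih hba).tail ⟨⟨hau.trans hub, hba⟩, ⟨(hau.trans hub).tail hbc, hva⟩, hbc⟩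

theorem scOn_sccOf : SCOn E (sccOf E a) :=
  fun _ hu _ hv => reflTransGen_sccOf (hu.2.trans hv.1) hu.1 hv.2

theorem sccOf_subset (ha : a ∈ S) : sccOf (fun x y => x ∈ S ∧ y ∈ S ∧ E x y) a ⊆ S := by
  rintro v ⟨-, hva⟩
  rcases hva.cases_head with rfl | ⟨_, hvc, -⟩
  exacts [ha, hvc.1]

theorem isSCCIn_sccOf (ha : a ∈ S) :
    IsSCCIn E S (sccOf (fun x y => x ∈ S ∧ y ∈ S ∧ E x y) a) :=
  ⟨⟨a, mem_sccOf_self⟩, sccOf_subset ha, scOn_sccOf, fun _ hCD _ hD =>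
    (hD.subset_sccOf (hCD mem_sccOf_self)).antisymm hCD⟩

end SCC

namespace IsEC

variable {V : Type*} {E : V → V → Prop} {VR X : Set V}

theorem nonempty (hX : IsEC E VR X) : X.Nonempty :=
  let ⟨a, ha, _⟩ := hX.2.1
  ⟨a, ha⟩

theorem exists_isSCCIn_superset (hX : IsEC E VR X) {S : Set V} (hXS : X ⊆ S) :
    ∃ C, IsSCCIn E S C ∧ X ⊆ C := by
  obtain ⟨a, ha⟩ := hX.nonempty
  have hXS' : SCOn (fun x y => x ∈ S ∧ y ∈ S ∧ E x y) X :=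
    hX.1.mono fun _ hu _ hv huv => ⟨hXS hu, hXS hv, huv⟩
  exact ⟨_, isSCCIn_sccOf (hXS ha), hXS'.subset_sccOf ha⟩

theorem exists_succ_mem (hX : IsEC E VR X) {v : V} (hv : v ∈ X) : ∃ w ∈ X, E v w := by
  obtain ⟨hSC, ⟨a, ha, b, hb, hab⟩, -⟩ := hX
  rcases (hSC v hv a ha).cases_head with rfl | ⟨c, hvc, -⟩
  exacts [⟨b, hb, hab⟩, ⟨c, hvc.2.1, hvc.2.2⟩]

theorem notMem_of_attrIn (hX : IsEC E VR X) {S W : Set V} (hXS : X ⊆ S) (hWX : W ∩ X = ∅)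
    {v : V} (hv : AttrIn E VR S W v) : v ∉ X := by
  induction hv with
  | base _ hW => exact fun hvX => hWX.subset ⟨hW, hvX⟩
  | rand _ hVR _ hvw _ ih => exact fun hvX => ih (hX.2.2 _ ⟨hvX, hVR⟩ _ hvw)
  | play _ _ _ ih =>
    intro hvX
    obtain ⟨w, hwX, hvw⟩ := hX.exists_succ_mem hvX
    exact ih w (hXS hwX) hvw hwX

end IsEC

theorem stmt4_general {V : Type*} (E : V → V → Prop) (VR X : Set V)
    (hEC : IsEC E VR X) :
    (∀ S : Set V, X ⊆ S → ∃ C : Set V, IsSCCIn E S C ∧ X ⊆ C) ∧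
    (∀ S' W : Set V, X ⊆ S' → W ⊆ S' → W ∩ X = ∅ →
      ∀ v ∈ X, ¬ AttrIn E VR S' W v) :=
  ⟨fun _ hXS => hEC.exists_isSCCIn_superset hXS,
    fun _ _ hXS _ hWX _ hvX hv => hEC.notMem_of_attrIn hXS hWX hv hvX⟩

theorem stmt4 {V : Type*} [Fintype V] (E : V → V → Prop) (VR X : Set V)
    (hEC : IsEC E VR X) :
    (∀ S : Set V, X ⊆ S → ∃ C : Set V, IsSCCIn E S C ∧ X ⊆ C) ∧
    (∀ S' W : Set V, X ⊆ S' → W ⊆ S' → W ∩ X = ∅ →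
      ∀ v ∈ X, ¬ AttrIn E VR S' W v) :=
  stmt4_general E VR X hEC
end

section
/- Let P = ((V,E),(V₁,V_R)) be an MDP skeleton and let SP = {(L_i, U_i) : 1 ≤ i ≤ k} be a family of Streett pairs with L_i, U_i ⊆ V. Let X be a good Streett end-component, i.e., an end-component of P such that for each 1 ≤ i ≤ k either L_i ∩ X = ∅ or U_i ∩ X ≠ ∅, and let S ⊆ V with X ⊆ S. Then for each index i with S ∩ U_i = ∅ it holds that X ⊆ S ∖ Attr(P[S], L_i ∩ S). -/
theorem stmt5 {V : Type*} [Fintype V] (E : V → V → Prop) (VR : Set V) (k : ℕ)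
    (L U : Fin k → Set V) (X S : Set V)
    (hEC : IsEC E VR X)
    -- `X` is a good Streett end-component:
    (hgood : ∀ i : Fin k, L i ∩ X = ∅ ∨ (U i ∩ X).Nonempty)
    (hXS : X ⊆ S) :
    ∀ i : Fin k, S ∩ U i = ∅ →
      X ⊆ S \ {v | AttrIn E VR S (L i ∩ S) v} := by
  intro i hSU
  obtain ⟨hSC, ⟨a, ha, b, hb, hab⟩, hclosed⟩ := hEC
  -- Since S ∩ U i = ∅ and X ⊆ S, U i ∩ X = ∅, so by goodness L i ∩ X = ∅.
  have hLX : L i ∩ X = ∅ := by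
    rcases hgood i with h | ⟨u, huU, huX⟩
    · exact h
    · exact absurd (Set.mem_inter (hXS huX) huU) (by simp [hSU])
  -- Key: every vertex in the attractor is not in X.
  have key : ∀ v, AttrIn E VR S (L i ∩ S) v → v ∉ X := by
    intro v hv
    induction hv with
    | @base v hvS hvW =>
        intro hvX
        exact absurd (Set.mem_inter hvW.1 hvX) (by simp [hLX])
    | @rand v w hvS hvVR hwS hE _ ih =>
        intro hvX
        exact ih (hclosed _ ⟨hvX, hvVR⟩ _ hE)
    | @play v hvS hvVR _ ih =>
        intro hvX
        -- v ∈ X has a successor inside X: follow a path from v to a, or use edge a→b.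
        have hreach := hSC v hvX a ha
        rcases Relation.ReflTransGen.cases_head hreach with heq | ⟨c, ⟨_, hcX, hvc⟩, _⟩
        · exact ih b (hXS hb) (heq ▸ hab) hb
        · exact ih c (hXS hcX) hvc hcX
  intro v hvX
  exact ⟨hXS hvX, fun hv => key v hv hvX⟩
end

section
/- Let H = (V, E) be a finite directed graph, let j ∈ ℕ, and let H_j = (V, E_j) be a subgraph of H (E_j ⊆ E) such that for every vertex v: if the out-degree of v in H is at most 2^j, then v has exactly the same out-edges in H_j as in H, and otherwise v has exactly 2^j out-edges in H_j. Let Bl_j = {v ∈ V : the out-degree of v in H exceeds 2^j}. Then: (1) a set C ⊆ V ∖ Bl_j is a bottom SCC of H_j if and only if it is a bottom SCC of H; and (2) every bottom SCC C of H with |C| ≤ 2^j satisfies C ⊆ V ∖ Bl_j. -/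
/-- `C` is a strongly connected component of the graph with edge relation `E`:
a maximal (nonempty) strongly connected set of vertices. -/
def IsSCC {V : Type*} (E : V → V → Prop) (C : Set V) : Prop :=
  C.Nonempty ∧ SCOn E C ∧ ∀ D, C ⊆ D → SCOn E D → D = C

/-- A bottom SCC: an SCC with no edge leaving it. -/
def IsBottomSCC {V : Type*} (E : V → V → Prop) (C : Set V) : Prop :=
  IsSCC E C ∧ ∀ a ∈ C, ∀ b, E a b → b ∈ C

/-! Being a bottom SCC of `E` only depends on the out-edges of the vertices of `C`, and the
vertices of `C ⊆ V ∖ Bl_j` keep all their out-edges in `H_j`. A bottom SCC is closed under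
out-edges, so the out-degree of each of its vertices is at most its size. -/

lemma SCOn.mono_of_forall_mem {V : Type*} {E E' : V → V → Prop} {X : Set V}
    (h : ∀ a ∈ X, ∀ b ∈ X, E a b → E' a b) (hX : SCOn E X) : SCOn E' X :=
  fun u hu v hv =>
    Relation.ReflTransGen.mono (fun a b ⟨ha, hb, hab⟩ => ⟨ha, hb, h a ha b hb hab⟩) u v
      (hX u hu v hv)

/-- Maximality is automatic: a strongly connected `D ⊇ C` is reachable from `C`, and a closed
`C` contains everything reachable from it. -/
lemma isBottomSCC_of_closed {V : Type*} {E : V → V → Prop} {C : Set V}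
    (hne : C.Nonempty) (hsc : SCOn E C) (hcl : ∀ a ∈ C, ∀ b, E a b → b ∈ C) :
    IsBottomSCC E C := by
  refine ⟨⟨hne, hsc, fun D hCD hD => Set.Subset.antisymm ?_ hCD⟩, hcl⟩
  obtain ⟨c, hc⟩ := hne
  intro d hd
  induction hD c (hCD hc) d hd with
  | refl => exact hc
  | tail _ hstep ih => exact hcl _ (ih hstep.1) _ hstep.2.2

lemma IsBottomSCC.of_forall_mem_iff {V : Type*} {E E' : V → V → Prop} {C : Set V}
    (h : ∀ a ∈ C, ∀ b, E a b ↔ E' a b) (hC : IsBottomSCC E C) : IsBottomSCC E' C := by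
  obtain ⟨⟨hne, hsc, -⟩, hcl⟩ := hC
  exact isBottomSCC_of_closed hne (hsc.mono_of_forall_mem fun a ha b _ => (h a ha b).1)
    fun a ha b hab => hcl a ha b ((h a ha b).2 hab)

lemma isBottomSCC_congr {V : Type*} {E E' : V → V → Prop} {C : Set V}
    (h : ∀ a ∈ C, ∀ b, E a b ↔ E' a b) : IsBottomSCC E C ↔ IsBottomSCC E' C :=
  ⟨.of_forall_mem_iff h, .of_forall_mem_iff fun a ha b => (h a ha b).symm⟩

lemma IsBottomSCC.ncard_outNeighbors_le {V : Type*} {E : V → V → Prop} {C : Set V}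
    (hC : IsBottomSCC E C) (hfin : C.Finite) {v : V} (hv : v ∈ C) :
    {w | E v w}.ncard ≤ C.ncard :=
  Set.ncard_le_ncard (fun w hw => hC.2 v hv w hw) hfin

theorem stmt6_general {V : Type*} [Fintype V] (E Ej : V → V → Prop) (j : ℕ)
    -- vertices of out-degree at most `2^j` keep exactly their out-edges:
    (hsmall : ∀ v : V, {w | E v w}.ncard ≤ 2 ^ j → ∀ w, Ej v w ↔ E v w) :
    -- (1) for `C ⊆ V ∖ Bl_j`, bottom SCC of `H_j` iff bottom SCC of `H`:
    (∀ C : Set V, (∀ v ∈ C, {w | E v w}.ncard ≤ 2 ^ j) →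
      (IsBottomSCC Ej C ↔ IsBottomSCC E C)) ∧
    -- (2) every bottom SCC of `H` with at most `2^j` vertices avoids `Bl_j`:
    (∀ C : Set V, IsBottomSCC E C → C.ncard ≤ 2 ^ j →
      ∀ v ∈ C, {w | E v w}.ncard ≤ 2 ^ j) :=
  ⟨fun _ hdeg => isBottomSCC_congr fun a ha => hsmall a (hdeg a ha),
    fun C hC hcard _ hv => (hC.ncard_outNeighbors_le C.toFinite hv).trans hcard⟩

theorem stmt6 {V : Type*} [Fintype V] (E Ej : V → V → Prop) (j : ℕ)
    -- `H_j = (V, E_j)` is a subgraph of `H = (V, E)`: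
    (hsub : ∀ a b : V, Ej a b → E a b)
    -- vertices of out-degree at most `2^j` keep exactly their out-edges:
    (hsmall : ∀ v : V, {w | E v w}.ncard ≤ 2 ^ j → ∀ w, Ej v w ↔ E v w)
    -- other vertices keep exactly `2^j` out-edges:
    (hbig : ∀ v : V, 2 ^ j < {w | E v w}.ncard → {w | Ej v w}.ncard = 2 ^ j) :
    -- (1) for `C ⊆ V ∖ Bl_j`, bottom SCC of `H_j` iff bottom SCC of `H`:
    (∀ C : Set V, (∀ v ∈ C, {w | E v w}.ncard ≤ 2 ^ j) →
      (IsBottomSCC Ej C ↔ IsBottomSCC E C)) ∧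
    -- (2) every bottom SCC of `H` with at most `2^j` vertices avoids `Bl_j`:
    (∀ C : Set V, IsBottomSCC E C → C.ncard ≤ 2 ^ j →
      ∀ v ∈ C, {w | E v w}.ncard ≤ 2 ^ j) :=
  stmt6_general E Ej j hsmall
end

section
/- Let P = ((V,E),(V₁,V_R)) be an MDP skeleton. (Distinct maximal end-components of P are disjoint, so the following quotient is well defined.) Let P' be the MDP skeleton obtained from P by contracting every MEC: each MEC X of P is replaced by a single player-1 vertex u_X; every edge of E between a vertex of X and a vertex outside of X becomes an edge between u_X and the image of that vertex; every edge of E inside X becomes a self-loop at u_X; all vertices belonging to no MEC keep their ownership (player-1 or random) and the edges among them are kept. Then P' contains no non-trivial end-component: every end-component of P' consists of a single vertex with a self-loop. -/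
/-- `X` is a maximal end-component (MEC). -/
def IsMEC {V : Type*} (E : V → V → Prop) (VR X : Set V) : Prop :=
  IsEC E VR X ∧ ∀ Y, IsEC E VR Y → X ⊆ Y → Y = X

/-!
Two end-components sharing a vertex have an end-component as union, so distinct MECs are
disjoint. For the contraction, the preimage of an end-component `Y` of `P'` is an
end-component of `P`: paths in `Y` lift because every fiber of the contraction is a single
vertex or a MEC, which is strongly connected; and a random vertex of the preimage either lies in
no MEC, so it is still random in `P'` and its successors map into `Y`, or lies in a MEC, which
contains all its successors. This end-component lies in some MEC, which the contraction
collapses to a single vertex, so `Y` is a singleton.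
-/

section MECContraction

variable {V V' : Type*}

def inducedRel (E : V → V → Prop) (X : Set V) (a b : V) : Prop :=
  a ∈ X ∧ b ∈ X ∧ E a b

theorem reflTransGen_inducedRel_mono {E : V → V → Prop} {X Y : Set V} (h : X ⊆ Y) {u v : V}
    (huv : Relation.ReflTransGen (inducedRel E X) u v) :
    Relation.ReflTransGen (inducedRel E Y) u v :=
  Relation.ReflTransGen.mono (fun _ _ hab => ⟨h hab.1, h hab.2.1, hab.2.2⟩) u v huv

theorem SCOn.union {E : V → V → Prop} {X Y : Set V} (hX : SCOn E X) (hY : SCOn E Y) {w : V}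
    (hwX : w ∈ X) (hwY : w ∈ Y) : SCOn E (X ∪ Y) := by
  have toW : ∀ u ∈ X ∪ Y, Relation.ReflTransGen (inducedRel E (X ∪ Y)) u w := by
    rintro u (hu | hu)
    · exact reflTransGen_inducedRel_mono Set.subset_union_left (hX u hu w hwX)
    · exact reflTransGen_inducedRel_mono Set.subset_union_right (hY u hu w hwY)
  have fromW : ∀ v ∈ X ∪ Y, Relation.ReflTransGen (inducedRel E (X ∪ Y)) w v := by
    rintro v (hv | hv)
    · exact reflTransGen_inducedRel_mono Set.subset_union_left (hX w hwX v hv)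
    · exact reflTransGen_inducedRel_mono Set.subset_union_right (hY w hwY v hv)
  exact fun u hu v hv => (toW u hu).trans (fromW v hv)

section EndComponents

variable {E : V → V → Prop} {VR : Set V}

theorem IsEC.union {X Y : Set V} (hX : IsEC E VR X) (hY : IsEC E VR Y) {w : V} (hwX : w ∈ X)
    (hwY : w ∈ Y) : IsEC E VR (X ∪ Y) := by
  obtain ⟨a, ha, b, hb, hab⟩ := hX.2.1
  refine ⟨hX.1.union hY.1 hwX hwY, ⟨a, Or.inl ha, b, Or.inl hb, hab⟩, ?_⟩
  rintro v ⟨hv | hv, hvR⟩ z hvz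
  · exact Or.inl (hX.2.2 v ⟨hv, hvR⟩ z hvz)
  · exact Or.inr (hY.2.2 v ⟨hv, hvR⟩ z hvz)

theorem IsMEC.eq_of_mem {X Y : Set V} (hX : IsMEC E VR X) (hY : IsMEC E VR Y) {w : V}
    (hwX : w ∈ X) (hwY : w ∈ Y) : X = Y := by
  have hXY := hX.1.union hY.1 hwX hwY
  exact (hX.2 _ hXY Set.subset_union_left).symm.trans (hY.2 _ hXY Set.subset_union_right)

theorem isMEC_iff_maximal {X : Set V} : IsMEC E VR X ↔ Maximal (IsEC E VR) X := by
  rw [maximal_iff]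
  exact and_congr_right fun _ => forall₂_congr fun Y _ => imp_congr_right fun _ => eq_comm

theorem IsEC.exists_isMEC_superset [Finite V] {S : Set V} (hS : IsEC E VR S) :
    ∃ X, IsMEC E VR X ∧ S ⊆ X := by
  obtain ⟨X, hSX, hX⟩ := (Set.toFinite {Y | IsEC E VR Y}).exists_le_maximal hS
  exact ⟨X, isMEC_iff_maximal.2 hX, hSX⟩

end EndComponents

structure IsMECContraction (E : V → V → Prop) (VR : Set V) (π : V → V')
    (E' : V' → V' → Prop) (VR' : Set V') : Prop where
  surjective : Function.Surjective π
  fiber_iff : ∀ x y : V, π x = π y ↔ (x = y ∨ ∃ X : Set V, IsMEC E VR X ∧ x ∈ X ∧ y ∈ X)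
  edge_iff : ∀ a b : V', E' a b ↔ ∃ x y : V, π x = a ∧ π y = b ∧ E x y
  random_iff : ∀ a : V', a ∈ VR' ↔
    ∃ x : V, π x = a ∧ x ∈ VR ∧ ∀ X : Set V, IsMEC E VR X → x ∉ X

namespace IsMECContraction

variable {E : V → V → Prop} {VR : Set V} {π : V → V'} {E' : V' → V' → Prop} {VR' : Set V'}
  (hC : IsMECContraction E VR π E' VR')
include hC

theorem map_eq_of_mem_isMEC {X : Set V} (hX : IsMEC E VR X) {x y : V} (hx : x ∈ X)
    (hy : y ∈ X) : π x = π y :=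
  (hC.fiber_iff x y).2 (Or.inr ⟨X, hX, hx, hy⟩)

theorem reflTransGen_of_map_eq {Y : Set V'} {x y : V} (hxy : π x = π y) (hx : π x ∈ Y) :
    Relation.ReflTransGen (inducedRel E (π ⁻¹' Y)) x y := by
  rcases (hC.fiber_iff x y).1 hxy with rfl | ⟨X, hX, hxX, hyX⟩
  · exact .refl
  · have hXY : X ⊆ π ⁻¹' Y := fun z hz =>
      Set.mem_preimage.2 ((hC.map_eq_of_mem_isMEC hX hz hxX).symm ▸ hx)
    exact reflTransGen_inducedRel_mono hXY (hX.1.1 x hxX y hyX)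

theorem reflTransGen_preimage {Y : Set V'} {a b : V'}
    (hab : Relation.ReflTransGen (inducedRel E' Y) a b) (ha : a ∈ Y) {u v : V} (hu : π u = a)
    (hv : π v = b) : Relation.ReflTransGen (inducedRel E (π ⁻¹' Y)) u v := by
  induction hab using Relation.ReflTransGen.head_induction_on generalizing u with
  | refl => exact hC.reflTransGen_of_map_eq (hu.trans hv.symm) (hu ▸ ha)
  | head hac _ ih =>
    obtain ⟨haY, hcY, hE'ac⟩ := hac
    obtain ⟨x, y, rfl, rfl, hxy⟩ := (hC.edge_iff _ _).1 hE'ac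
    exact (hC.reflTransGen_of_map_eq hu (hu ▸ haY)).trans (.head ⟨haY, hcY, hxy⟩ (ih hcY rfl))

theorem isEC_preimage {Y : Set V'} (hY : IsEC E' VR' Y) : IsEC E VR (π ⁻¹' Y) := by
  refine ⟨fun u hu v hv => hC.reflTransGen_preimage (hY.1 _ hu _ hv) hu rfl rfl, ?_, ?_⟩
  · obtain ⟨a, ha, b, hb, hab⟩ := hY.2.1
    obtain ⟨x, y, rfl, rfl, hxy⟩ := (hC.edge_iff a b).1 hab
    exact ⟨x, ha, y, hb, hxy⟩
  · rintro v ⟨hvY, hvR⟩ w hvw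
    by_cases hMEC : ∃ X, IsMEC E VR X ∧ v ∈ X
    · obtain ⟨X, hX, hvX⟩ := hMEC
      exact Set.mem_preimage.2 ((hC.map_eq_of_mem_isMEC hX (hX.1.2.2 v ⟨hvX, hvR⟩ w hvw) hvX).symm ▸ hvY)
    · have hvR' : π v ∈ VR' :=
        (hC.random_iff _).2 ⟨v, rfl, hvR, fun X hX hvX => hMEC ⟨X, hX, hvX⟩⟩
      exact hY.2.2 (π v) ⟨hvY, hvR'⟩ (π w) ((hC.edge_iff _ _).2 ⟨v, w, rfl, rfl, hvw⟩)

theorem isEC_eq_singleton [Finite V] {Y : Set V'} (hY : IsEC E' VR' Y) :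
    ∃ a, Y = {a} ∧ E' a a := by
  obtain ⟨X, hX, hYX⟩ := (hC.isEC_preimage hY).exists_isMEC_superset
  have hconst : ∀ a ∈ Y, ∀ b ∈ Y, a = b := by
    intro a ha b hb
    obtain ⟨x, rfl⟩ := hC.surjective a
    obtain ⟨y, rfl⟩ := hC.surjective b
    exact hC.map_eq_of_mem_isMEC hX (hYX ha) (hYX hb)
  obtain ⟨a, ha, b, hb, hab⟩ := hY.2.1
  exact ⟨a, Set.eq_singleton_iff_unique_mem.2 ⟨ha, fun c hc => hconst c hc a ha⟩,
    hconst b hb a ha ▸ hab⟩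

end IsMECContraction

end MECContraction

theorem stmt7_general {V V' : Type*} [Fintype V] (E : V → V → Prop) (VR : Set V)
    (π : V → V') (hsurj : Function.Surjective π)
    (hπ : ∀ x y : V, π x = π y ↔ (x = y ∨ ∃ X : Set V, IsMEC E VR X ∧ x ∈ X ∧ y ∈ X))
    (E' : V' → V' → Prop)
    (hE' : ∀ a b : V', E' a b ↔ ∃ x y : V, π x = a ∧ π y = b ∧ E x y)
    (VR' : Set V')
    (hVR' : ∀ a : V', a ∈ VR' ↔
      ∃ x : V, π x = a ∧ x ∈ VR ∧ ∀ X : Set V, IsMEC E VR X → x ∉ X) :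
    (∀ X Y : Set V, IsMEC E VR X → IsMEC E VR Y → X ≠ Y → X ∩ Y = ∅) ∧
    (∀ Y : Set V', IsEC E' VR' Y → ∃ a : V', Y = {a} ∧ E' a a) :=
  ⟨fun _ _ hX hY hne => Set.eq_empty_of_forall_notMem fun _ hw => hne (hX.eq_of_mem hY hw.1 hw.2),
    fun _ hY => (IsMECContraction.mk hsurj hπ hE' hVR').isEC_eq_singleton hY⟩

/-- Contracting every MEC of the MDP skeleton `(E, VR)` yields an MDP skeleton with no
non-trivial end-component.  The contraction is described by a surjection `π : V → V'`
identifying exactly the vertices lying in a common MEC; the contracted edge relation `E'`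
is the image of `E` under `π`; the random vertices `VR'` of the contraction are the
images of the random vertices lying in no MEC (contracted MECs become player-1 vertices).
Distinct MECs are disjoint (first conjunct), so such a quotient is well defined. -/
theorem stmt7 {V V' : Type*} [Fintype V] [Fintype V'] (E : V → V → Prop) (VR : Set V)
    (π : V → V') (hsurj : Function.Surjective π)
    (hπ : ∀ x y : V, π x = π y ↔ (x = y ∨ ∃ X : Set V, IsMEC E VR X ∧ x ∈ X ∧ y ∈ X))
    (E' : V' → V' → Prop)
    (hE' : ∀ a b : V', E' a b ↔ ∃ x y : V, π x = a ∧ π y = b ∧ E x y)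
    (VR' : Set V')
    (hVR' : ∀ a : V', a ∈ VR' ↔
      ∃ x : V, π x = a ∧ x ∈ VR ∧ ∀ X : Set V, IsMEC E VR X → x ∉ X) :
    (∀ X Y : Set V, IsMEC E VR X → IsMEC E VR Y → X ≠ Y → X ∩ Y = ∅) ∧
    (∀ Y : Set V', IsEC E' VR' Y → ∃ a : V', Y = {a} ∧ E' a a) :=
  stmt7_general E VR π hsurj hπ E' hE' VR' hVR'
end

section
/- Let P = ((V,E),(V₁,V_R)) be an MDP skeleton, let X be a MEC of P, and let T ⊆ V. Then there exists an end-component Y of P with Y ⊆ X and Y ∩ T = ∅ if and only if Attr(P[X], T ∩ X) ≠ X. -/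
/-!
Inside an end-component `Y` every random vertex has all its successors in `Y` and every player
vertex has one, so by induction on the attractor no vertex of `Y` is attracted to a set `Y`
avoids. Conversely, `X \ Attr` is a sub-MDP: every vertex keeps a successor in it and random
vertices cannot leave it. In a finite sub-MDP a minimal nonempty subset closed under its edges
is strongly connected, since the vertices reachable from any of its points form such a subset;
it is thus an end-component avoiding `T`.
-/

section

variable {V : Type*} {E : V → V → Prop} {VR : Set V}

def IsSubMDP (E : V → V → Prop) (VR B : Set V) : Prop :=
  (∀ v ∈ B, ∃ w ∈ B, E v w) ∧ ∀ v ∈ B ∩ VR, ∀ w, E v w → w ∈ B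

lemma SCOn.exists_succ {X : Set V} (hSC : SCOn E X) (hedge : ∃ a ∈ X, ∃ b ∈ X, E a b) :
    ∀ v ∈ X, ∃ w ∈ X, E v w := by
  obtain ⟨a, ha, b, hb, hab⟩ := hedge
  intro v hv
  rcases (hSC v hv a ha).cases_head with rfl | ⟨w, hvw, _⟩
  · exact ⟨b, hb, hab⟩
  · exact ⟨w, hvw.2.1, hvw.2.2⟩

lemma IsEC.isSubMDP {X : Set V} (hX : IsEC E VR X) : IsSubMDP E VR X :=
  ⟨hX.1.exists_succ hX.2.1, hX.2.2⟩

lemma IsEC.nonempty_s15 {X : Set V} (hX : IsEC E VR X) : X.Nonempty :=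
  let ⟨a, ha, _⟩ := hX.2.1
  ⟨a, ha⟩

namespace AttrIn

variable {S W : Set V}

lemma mem {v : V} (h : AttrIn E VR S W v) : v ∈ S := by
  cases h <;> assumption

lemma notMem_of_isEC {Y : Set V} (hY : IsEC E VR Y) (hYS : Y ⊆ S) (hYW : Y ∩ W = ∅)
    {v : V} (h : AttrIn E VR S W v) : v ∉ Y := by
  induction h with
  | base _ hvW => exact fun hvY => hYW.subset ⟨hvY, hvW⟩
  | rand _ hvR _ hvw _ ih => exact fun hvY => ih (hY.2.2 _ ⟨hvY, hvR⟩ _ hvw)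
  | play _ _ _ ih =>
    intro hvY
    obtain ⟨w, hwY, hvw⟩ := hY.1.exists_succ hY.2.1 _ hvY
    exact ih w (hYS hwY) hvw hwY

end AttrIn

lemma IsSubMDP.diff_attrIn {X W : Set V} (hX : IsSubMDP E VR X) :
    IsSubMDP E VR (X \ {v | AttrIn E VR X W v}) := by
  constructor
  · rintro v ⟨hvX, hvA⟩
    by_cases hvR : v ∈ VR
    · obtain ⟨w, hwX, hvw⟩ := hX.1 v hvX
      exact ⟨w, ⟨hwX, fun hwA => hvA (.rand hvX hvR hwX hvw hwA)⟩, hvw⟩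
    · by_contra! hstuck
      exact hvA (.play hvX hvR fun w hwX hvw => by_contra fun hwA => hstuck w ⟨hwX, hwA⟩ hvw)
  · rintro v ⟨⟨hvX, hvA⟩, hvR⟩ w hvw
    have hwX := hX.2 v ⟨hvX, hvR⟩ w hvw
    exact ⟨hwX, fun hwA => hvA (.rand hvX hvR hwX hvw hwA)⟩

def IsClosedIn (E : V → V → Prop) (B C : Set V) : Prop :=
  ∀ v ∈ C, ∀ w ∈ B, E v w → w ∈ C

lemma scOn_of_minimal {B Y : Set V}
    (hY : Minimal (fun C => C ⊆ B ∧ C.Nonempty ∧ IsClosedIn E B C) Y) : SCOn E Y := by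
  intro u hu v hv
  let R : Set V := {x | x ∈ Y ∧ Relation.ReflTransGen (fun a b => a ∈ Y ∧ b ∈ Y ∧ E a b) u x}
  have hR : R ⊆ B ∧ R.Nonempty ∧ IsClosedIn E B R := by
    refine ⟨fun x hx => hY.prop.1 hx.1, ⟨u, hu, .refl⟩, ?_⟩
    rintro x ⟨hxY, hux⟩ w hwB hxw
    have hwY := hY.prop.2.2 x hxY w hwB hxw
    exact ⟨hwY, hux.tail ⟨hxY, hwY, hxw⟩⟩
  exact (hY.2 hR (fun x hx => hx.1) hv).2

lemma IsSubMDP.exists_isEC_subset [Finite V] {B : Set V} (hB : IsSubMDP E VR B)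
    (hne : B.Nonempty) : ∃ Y, IsEC E VR Y ∧ Y ⊆ B := by
  obtain ⟨Y, hY⟩ := exists_minimal_of_wellFoundedLT
    (fun C => C ⊆ B ∧ C.Nonempty ∧ IsClosedIn E B C) ⟨B, subset_rfl, hne, fun _ _ _ hw _ => hw⟩
  obtain ⟨hYB, ⟨u, hu⟩, hYclosed⟩ := hY.prop
  have hedge : ∃ a ∈ Y, ∃ b ∈ Y, E a b := by
    obtain ⟨w, hwB, huw⟩ := hB.1 u (hYB hu)
    exact ⟨u, hu, w, hYclosed u hu w hwB huw, huw⟩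
  refine ⟨Y, ⟨scOn_of_minimal hY, hedge, ?_⟩, hYB⟩
  rintro v ⟨hvY, hvR⟩ w hvw
  exact hYclosed v hvY w (hB.2 v ⟨hYB hvY, hvR⟩ w hvw) hvw

end

theorem stmt15 {V : Type*} [Fintype V] (E : V → V → Prop) (VR X T : Set V)
    (hMEC : IsMEC E VR X) :
    (∃ Y : Set V, IsEC E VR Y ∧ Y ⊆ X ∧ Y ∩ T = ∅) ↔
      {v | AttrIn E VR X (T ∩ X) v} ≠ X := by
  set A := {v | AttrIn E VR X (T ∩ X) v}
  have hAX : A ⊆ X := fun _ hv => AttrIn.mem hv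
  constructor
  · rintro ⟨Y, hY, hYX, hYT⟩ hAeq
    obtain ⟨a, ha⟩ := hY.nonempty_s15
    have hYTX : Y ∩ (T ∩ X) = ∅ := Set.subset_empty_iff.mp fun x hx => hYT.subset ⟨hx.1, hx.2.1⟩
    exact AttrIn.notMem_of_isEC hY hYX hYTX (hAeq ▸ hYX ha : a ∈ A) ha
  · intro hne
    have hdiff : (X \ A).Nonempty := Set.sdiff_nonempty.mpr fun hXA => hne (hAX.antisymm hXA)
    obtain ⟨Y, hY, hYB⟩ := hMEC.1.isSubMDP.diff_attrIn.exists_isEC_subset hdiff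
    refine ⟨Y, hY, fun v hv => (hYB hv).1, Set.subset_empty_iff.mp ?_⟩
    rintro v ⟨hvY, hvT⟩
    exact (hYB hvY).2 (.base (hYB hvY).1 ⟨hvT, (hYB hvY).1⟩)
end
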